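/- arXiv:2110.03950 — 6 statements merged into one kernel-verified Lean document; each statement's English description precedes it below -/
import Mathlib

section
/- Let X ⊆ E be convex, and let φ, φ̂ : X → ℝ be λ̄-weakly convex functions. Fix x ∈ X and λ̄ > 0, and let x⁺ be the minimizer of u ↦ φ(u) + λ̄‖u - x‖² over X and x̂⁺ be the minimizer of u ↦ φ̂(u) + λ̄‖u - x‖² over X. Then λ̄‖x̂⁺ - x⁺‖² ≤ 2 · sup_{u ∈ X} |φ̂(u) - φ(u)|. -/
open RealInnerProductSpace

private lemma comb_norm_sq {E : Type*} [NormedAddCommGroup E] [InnerProductSpace ℝ E]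
    (a b : E) (t : ℝ) :
    ‖(1 - t) • a + t • b‖ ^ 2
      = (1 - t) * ‖a‖ ^ 2 + t * ‖b‖ ^ 2 - t * (1 - t) * ‖a - b‖ ^ 2 := by
  have h : ∀ v : E, ‖v‖ ^ 2 = ⟪v, v⟫ := fun v => (real_inner_self_eq_norm_sq v).symm
  simp only [h]
  simp only [inner_add_left, inner_add_right, inner_sub_left, inner_sub_right,
    inner_smul_left, inner_smul_right, RCLike.conj_to_real, real_inner_comm a b]
  ring

private lemma key_ineq {E : Type*} [NormedAddCommGroup E] [InnerProductSpace ℝ E]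
    (X : Set E) (hX : Convex ℝ X) (φ : E → ℝ) (lam : ℝ) (hlam : 0 < lam)
    (hφ : ConvexOn ℝ X (fun u => φ u + lam / 2 * ‖u‖ ^ 2))
    (x a b : E) (ha : a ∈ X) (hb : b ∈ X)
    (hmin : ∀ u ∈ X, φ a + lam * ‖a - x‖ ^ 2 ≤ φ u + lam * ‖u - x‖ ^ 2)
    (t : ℝ) (ht0 : 0 < t) (ht1 : t < 1) :
    lam / 2 * (1 - t) * ‖a - b‖ ^ 2
      ≤ (φ b + lam * ‖b - x‖ ^ 2) - (φ a + lam * ‖a - x‖ ^ 2) := by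
  have hm : (1 - t) • a + t • b ∈ X :=
    hX ha hb (by linarith) (le_of_lt ht0) (by ring)
  have hconv := hφ.2 ha hb (by linarith : (0:ℝ) ≤ 1 - t) (le_of_lt ht0) (by ring)
  simp only at hconv
  have hmin' := hmin _ hm
  have e1 : ‖(1 - t) • a + t • b‖ ^ 2
      = (1 - t) * ‖a‖ ^ 2 + t * ‖b‖ ^ 2 - t * (1 - t) * ‖a - b‖ ^ 2 :=
    comb_norm_sq a b t
  have e2 : ‖((1 - t) • a + t • b) - x‖ ^ 2
      = (1 - t) * ‖a - x‖ ^ 2 + t * ‖b - x‖ ^ 2 - t * (1 - t) * ‖a - b‖ ^ 2 := by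
    have : ((1 - t) • a + t • b) - x = (1 - t) • (a - x) + t • (b - x) := by
      module
    rw [this, comb_norm_sq]
    congr 2
    abel_nf
  rw [e2] at hmin'
  rw [e1] at hconv
  have H : t * (lam / 2 * (1 - t) * ‖a - b‖ ^ 2)
      ≤ t * ((φ b + lam * ‖b - x‖ ^ 2) - (φ a + lam * ‖a - x‖ ^ 2)) := by
    simp only [smul_eq_mul] at hconv
    nlinarith [hmin', hconv]
  exact le_of_mul_le_mul_left H ht0

/-- Proximal points of two weakly convex functions are close when the functions are uniformly close. -/
theorem stmt4 {E : Type*} [NormedAddCommGroup E] [InnerProductSpace ℝ E]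
    [FiniteDimensional ℝ E] (X : Set E) (hX : Convex ℝ X)
    (φ φhat : E → ℝ) (lam : ℝ) (hlam : 0 < lam)
    (hφ : ConvexOn ℝ X (fun u => φ u + lam / 2 * ‖u‖ ^ 2))
    (hφhat : ConvexOn ℝ X (fun u => φhat u + lam / 2 * ‖u‖ ^ 2))
    (x : E) (hx : x ∈ X)
    (xp : E) (hxp : xp ∈ X)
    (hxpmin : ∀ u ∈ X, φ xp + lam * ‖xp - x‖ ^ 2 ≤ φ u + lam * ‖u - x‖ ^ 2)
    (xhp : E) (hxhp : xhp ∈ X)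
    (hxhpmin : ∀ u ∈ X, φhat xhp + lam * ‖xhp - x‖ ^ 2 ≤ φhat u + lam * ‖u - x‖ ^ 2)
    (Δ : ℝ) (hgap : ∀ u ∈ X, |φhat u - φ u| ≤ Δ) :
    lam * ‖xhp - xp‖ ^ 2 ≤ 2 * Δ := by
  have hΔ0 : 0 ≤ Δ := le_trans (abs_nonneg _) (hgap x hx)
  have hgap1 := abs_le.mp (hgap xp hxp)
  have hgap2 := abs_le.mp (hgap xhp hxhp)
  have ht : ∀ t : ℝ, 0 < t → t < 1 → lam * (1 - t) * ‖xhp - xp‖ ^ 2 ≤ 2 * Δ := by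
    intro t ht0 ht1
    have h1 := key_ineq X hX φ lam hlam hφ x xp xhp hxp hxhp hxpmin t ht0 ht1
    have h2 := key_ineq X hX φhat lam hlam hφhat x xhp xp hxhp hxp hxhpmin t ht0 ht1
    have hsym : ‖xp - xhp‖ = ‖xhp - xp‖ := norm_sub_rev _ _
    rw [hsym] at h1
    nlinarith [h1, h2]
  by_contra hcon
  push_neg at hcon
  set c := lam * ‖xhp - xp‖ ^ 2 with hc
  have hcpos : 0 < c := lt_of_le_of_lt (by linarith) hcon
  have ht0' : (0:ℝ) < (c - 2 * Δ) / (2 * c) := div_pos (by linarith) (by linarith)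
  have ht1' : (c - 2 * Δ) / (2 * c) < 1 := (div_lt_one (by linarith)).mpr (by linarith)
  have hT := ht _ ht0' ht1'
  have e1 : lam * (1 - (c - 2 * Δ) / (2 * c)) * ‖xhp - xp‖ ^ 2
      = c * (1 - (c - 2 * Δ) / (2 * c)) := by rw [hc]; ring
  have e2 : c * (1 - (c - 2 * Δ) / (2 * c)) = (c + 2 * Δ) / 2 := by
    field_simp
    ring
  rw [e1, e2] at hT
  linarith
end

section
/- Let X ⊆ E be convex, φ, φ̂ : X → ℝ be λ̄-weakly convex, and suppose sup_{u ∈ X} |φ̂(u) - φ(u)| ≤ Δ. Then for every x ∈ X, ‖∇φ̂_{2λ̄}(x) - ∇φ_{2λ̄}(x)‖ ≤ √(8 λ̄ Δ), where φ_{2λ̄}(x) = min_{u ∈ X} { φ(u) + λ̄‖u - x‖² } is the Moreau envelope and ∇φ_{2λ̄}(x) = 2λ̄(x - x⁺) with x⁺ the corresponding proximal point (similarly for φ̂). -/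
/-!
Both Moreau-envelope gradients are `2λ̄ (x - ·)` of proximal points, so the claim is a bound on
the distance of the two proximal points. These minimise the `λ̄`-strongly convex functions
`φ + λ̄‖· - x‖²` and `φ̂ + λ̄‖· - x‖²`, which grow quadratically away from their minimisers:
evaluating each at the other's minimiser and adding gives `λ̄‖x⁺ - x̂⁺‖² ≤ 2Δ`.
-/

open Filter Topology

section StrongConvexity

variable {E : Type*} [NormedAddCommGroup E] [InnerProductSpace ℝ E] {s : Set E} {m : ℝ}

lemma ConvexOn.strongConvexOn_add_mul_sq_norm_sub {ψ : E → ℝ}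
    (hψ : ConvexOn ℝ s fun u ↦ ψ u + m / 2 * ‖u‖ ^ 2) (x : E) :
    StrongConvexOn s m fun u ↦ ψ u + m * ‖u - x‖ ^ 2 := by
  rw [strongConvexOn_iff_convex]
  have hlin : ConvexOn ℝ s fun u ↦ -(2 * m) * inner ℝ x u + m * ‖x‖ ^ 2 :=
    (((-(2 * m)) • innerₛₗ ℝ x).convexOn hψ.1).add_const _
  refine (hψ.add hlin).congr fun u _ ↦ ?_
  simp only [Pi.add_apply, norm_sub_sq_real, real_inner_comm x u]
  ring

lemma StrongConvexOn.add_mul_sq_norm_sub_le_of_isMinOn {f : E → ℝ} {p u : E}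
    (hf : StrongConvexOn s m f) (hp : p ∈ s) (hmin : IsMinOn f s p) (hu : u ∈ s) :
    f p + m / 2 * ‖u - p‖ ^ 2 ≤ f u := by
  set B := m / 2 * ‖u - p‖ ^ 2
  have hsegment : ∀ t ∈ Set.Ioo (0 : ℝ) 1, f p + (1 - t) * B ≤ f u := by
    rintro t ⟨ht0, ht1⟩
    have hconv := hf.2 hp hu (by linarith) ht0.le (sub_add_cancel 1 t)
    have hle := isMinOn_iff.mp hmin _ (hf.1 hp hu (by linarith) ht0.le (sub_add_cancel 1 t))
    rw [norm_sub_rev] at hconv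
    simp only [smul_eq_mul] at hconv
    refine le_of_mul_le_mul_left ?_ ht0
    linear_combination hle.trans hconv
  have hlim : Tendsto (fun t : ℝ ↦ f p + (1 - t) * B) (𝓝[>] 0) (𝓝 (f p + B)) :=
    (Continuous.tendsto' (by fun_prop) 0 _ (by simp)).mono_left nhdsWithin_le_nhds
  exact le_of_tendsto hlim (eventually_of_mem (Ioo_mem_nhdsGT zero_lt_one) hsegment)

lemma StrongConvexOn.mul_sq_norm_sub_le_of_isMinOn {f g : E → ℝ} {p q : E} {Δ : ℝ}
    (hf : StrongConvexOn s m f) (hg : StrongConvexOn s m g) (hp : p ∈ s) (hq : q ∈ s)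
    (hpmin : IsMinOn f s p) (hqmin : IsMinOn g s q) (hclose : ∀ u ∈ s, |g u - f u| ≤ Δ) :
    m * ‖p - q‖ ^ 2 ≤ 2 * Δ := by
  have hfq := hf.add_mul_sq_norm_sub_le_of_isMinOn hp hpmin hq
  have hgp := hg.add_mul_sq_norm_sub_le_of_isMinOn hq hqmin hp
  rw [norm_sub_rev] at hfq
  have hcp := (abs_le.mp (hclose p hp)).2
  have hcq := (abs_le.mp (hclose q hq)).1
  linarith

end StrongConvexity

theorem stmt5_general {E : Type*} [NormedAddCommGroup E] [InnerProductSpace ℝ E]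
    (X : Set E)
    (φ φhat : E → ℝ) (lam : ℝ) (hlam : 0 < lam)
    (hφ : ConvexOn ℝ X (fun u => φ u + lam / 2 * ‖u‖ ^ 2))
    (hφhat : ConvexOn ℝ X (fun u => φhat u + lam / 2 * ‖u‖ ^ 2))
    (Δ : ℝ) (hgap : ∀ u ∈ X, |φhat u - φ u| ≤ Δ)
    (x : E)
    (xp : E) (hxp : xp ∈ X)
    (hxpmin : ∀ u ∈ X, φ xp + lam * ‖xp - x‖ ^ 2 ≤ φ u + lam * ‖u - x‖ ^ 2)
    (xhp : E) (hxhp : xhp ∈ X)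
    (hxhpmin : ∀ u ∈ X, φhat xhp + lam * ‖xhp - x‖ ^ 2 ≤ φhat u + lam * ‖u - x‖ ^ 2) :
    ‖(2 * lam) • (x - xhp) - (2 * lam) • (x - xp)‖ ≤ Real.sqrt (8 * lam * Δ) := by
  have hdist : lam * ‖xp - xhp‖ ^ 2 ≤ 2 * Δ :=
    (hφ.strongConvexOn_add_mul_sq_norm_sub x).mul_sq_norm_sub_le_of_isMinOn
      (hφhat.strongConvexOn_add_mul_sq_norm_sub x) hxp hxhp (isMinOn_iff.mpr hxpmin)
      (isMinOn_iff.mpr hxhpmin) fun u hu ↦ by simpa using hgap u hu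
  have hgrad : (2 * lam) • (x - xhp) - (2 * lam) • (x - xp) = (2 * lam) • (xp - xhp) := by
    rw [← smul_sub, sub_sub_sub_cancel_left]
  rw [hgrad, norm_smul, Real.norm_of_nonneg (by positivity)]
  apply Real.le_sqrt_of_sq_le
  nlinarith

/-- Gradients of the Moreau envelopes of two uniformly close weakly convex functions are close. -/
theorem stmt5 {E : Type*} [NormedAddCommGroup E] [InnerProductSpace ℝ E]
    [FiniteDimensional ℝ E] (X : Set E) (hX : Convex ℝ X) (hXc : IsClosed X)
    (φ φhat : E → ℝ) (lam : ℝ) (hlam : 0 < lam)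
    (hφ : ConvexOn ℝ X (fun u => φ u + lam / 2 * ‖u‖ ^ 2))
    (hφhat : ConvexOn ℝ X (fun u => φhat u + lam / 2 * ‖u‖ ^ 2))
    (Δ : ℝ) (hgap : ∀ u ∈ X, |φhat u - φ u| ≤ Δ)
    (x : E) (hx : x ∈ X)
    (xp : E) (hxp : xp ∈ X)
    (hxpmin : ∀ u ∈ X, φ xp + lam * ‖xp - x‖ ^ 2 ≤ φ u + lam * ‖u - x‖ ^ 2)
    (xhp : E) (hxhp : xhp ∈ X)
    (hxhpmin : ∀ u ∈ X, φhat xhp + lam * ‖xhp - x‖ ^ 2 ≤ φhat u + lam * ‖u - x‖ ^ 2) :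
    ‖(2 * lam) • (x - xhp) - (2 * lam) • (x - xp)‖ ≤ Real.sqrt (8 * lam * Δ) :=
  stmt5_general X φ φhat lam hlam hφ hφhat Δ hgap x xp hxp hxpmin xhp hxhp hxhpmin
end

section
/- Define the soft-thresholding operator [z]_r := sign(z) · max(|z| - r, 0) for z ∈ ℝ and r ≥ 0. Let λ > 0, r > 0, and define φ(x) = λ(-x²/2 + r|x|) on X = [-r, r]. Then for every x ∈ [-r, r], the minimizer of u ↦ λ(u - x)² + φ(u) over [-r, r] equals [2x]_r. -/
/-- Soft-thresholding operator `[z]_r = sign(z) · max(|z| - r, 0)`. -/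
noncomputable def softThresh (r z : ℝ) : ℝ := Real.sign z * max (|z| - r) 0

lemma stmt8_aux (lam r x s : ℝ) (hlam : 0 < lam) (hs1 : -r ≤ s) (hs2 : s ≤ r)
    (key : ∀ u : ℝ, (u - s) ^ 2 / 2 ≤
      (u ^ 2 / 2 - 2 * x * u + r * |u|) - (s ^ 2 / 2 - 2 * x * s + r * |s|)) :
    s ∈ Set.Icc (-r) r ∧
    (∀ u ∈ Set.Icc (-r) r,
      lam * (s - x) ^ 2 + lam * (-s ^ 2 / 2 + r * |s|)
        ≤ lam * (u - x) ^ 2 + lam * (-u ^ 2 / 2 + r * |u|)) ∧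
    (∀ u ∈ Set.Icc (-r) r,
      lam * (u - x) ^ 2 + lam * (-u ^ 2 / 2 + r * |u|)
          = lam * (s - x) ^ 2 + lam * (-s ^ 2 / 2 + r * |s|)
        → u = s) := by
  refine ⟨⟨hs1, hs2⟩, ?_, ?_⟩
  · intro u _
    have h := key u
    nlinarith [sq_nonneg (u - s)]
  · intro u _ heq
    have h := key u
    have h2 : (u - s) ^ 2 ≤ 0 := by nlinarith
    have h3 : (u - s) ^ 2 = 0 := le_antisymm h2 (sq_nonneg _)
    have := pow_eq_zero_iff (n := 2) (by norm_num) |>.mp h3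
    linarith

/-- The proximal mapping of φ(u) = λ(-u²/2 + r|u|) on [-r, r] with stepsize 1/(2λ)
is the soft thresholding of 2x at level r. -/
theorem stmt8 (lam r : ℝ) (hlam : 0 < lam) (hr : 0 < r)
    (x : ℝ) (hx : x ∈ Set.Icc (-r) r) :
    softThresh r (2 * x) ∈ Set.Icc (-r) r ∧
    (∀ u ∈ Set.Icc (-r) r,
      lam * (softThresh r (2 * x) - x) ^ 2
          + lam * (-(softThresh r (2 * x)) ^ 2 / 2 + r * |softThresh r (2 * x)|)
        ≤ lam * (u - x) ^ 2 + lam * (-u ^ 2 / 2 + r * |u|)) ∧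
    (∀ u ∈ Set.Icc (-r) r,
      lam * (u - x) ^ 2 + lam * (-u ^ 2 / 2 + r * |u|)
          = lam * (softThresh r (2 * x) - x) ^ 2
            + lam * (-(softThresh r (2 * x)) ^ 2 / 2 + r * |softThresh r (2 * x)|)
        → u = softThresh r (2 * x)) := by
  obtain ⟨hx1, hx2⟩ := hx
  rcases lt_or_ge r (2 * x) with hA | hA
  · -- s = 2x - r
    have hpos : 0 < 2 * x := by linarith
    have hs : softThresh r (2 * x) = 2 * x - r := by
      rw [softThresh, Real.sign_of_pos hpos, abs_of_pos hpos, one_mul,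
        max_eq_left (by linarith)]
    rw [hs]
    have hsabs : |2 * x - r| = 2 * x - r := abs_of_pos (by linarith)
    exact stmt8_aux lam r x (2 * x - r) hlam (by linarith) (by linarith)
      (fun u => by rw [hsabs]; nlinarith [le_abs_self u])
  rcases lt_or_ge (2 * x) (-r) with hB | hB
  · -- s = 2x + r
    have hneg : 2 * x < 0 := by linarith
    have hs : softThresh r (2 * x) = 2 * x + r := by
      rw [softThresh, Real.sign_of_neg hneg, abs_of_neg hneg,
        max_eq_left (by linarith)]
      ring
    rw [hs]
    have hsabs : |2 * x + r| = -(2 * x + r) := abs_of_neg (by linarith)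
    exact stmt8_aux lam r x (2 * x + r) hlam (by linarith) (by linarith)
      (fun u => by rw [hsabs]; nlinarith [neg_le_abs u])
  · -- s = 0
    have hs : softThresh r (2 * x) = 0 := by
      rw [softThresh, max_eq_right, mul_zero]
      have : |2 * x| ≤ r := abs_le.mpr ⟨by linarith, by linarith⟩
      linarith
    rw [hs]
    exact stmt8_aux lam r x 0 hlam (by linarith) (by linarith)
      (fun u => by
        have h1 : 0 ≤ |u| + u := by linarith [neg_le_abs u]
        have h2 : 0 ≤ |u| - u := by linarith [le_abs_self u]
        have habs0 : |(0:ℝ)| = 0 := abs_zero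
        rw [habs0]
        nlinarith [mul_nonneg (show (0:ℝ) ≤ r - 2 * x by linarith) h1,
          mul_nonneg (show (0:ℝ) ≤ r + 2 * x by linarith) h2])
end

section
/- Let λ, μ, D > 0, R = D/2, r = μR/λ. Consider f(x,y) = -(λ/2)x² + μxy on [-r, r] × [-R, R], the primal function φ(x) = max_{y ∈ [-R,R]} f(x,y) = λ(-x²/2 + r|x|), and the Moreau envelope φ_{2λ}(x) = min_{u ∈ [-r,r]} { φ(u) + λ(u - x)² }. Then φ_{2λ} is differentiable at x* = r/2 and |φ_{2λ}'(x*)| = μR, i.e., equals μD/2. -/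
/-!
On `0 ≤ x ≤ r` the proximal point of `x` is the soft threshold `p = max (2x - r) 0`, and the
envelope equals `λ x² - (λ/2) p²`. At `x = r/2` the threshold switches on, but `p²` vanishes to
second order there, so the envelope is differentiable with derivative `2λ · (r/2) = λ r = μ R`.
-/

open Set Topology

theorem hasDerivAt_max_zero_sq_zero : HasDerivAt (fun t : ℝ => max t 0 ^ 2) 0 0 := by
  have hleft : HasDerivWithinAt (fun t : ℝ => max t 0 ^ 2) 0 (Iic 0) 0 :=
    (hasDerivWithinAt_const (0 : ℝ) (Iic 0) (0 : ℝ)).congr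
      (fun t ht => by simp [max_eq_right (mem_Iic.mp ht)]) (by simp)
  have hright : HasDerivWithinAt (fun t : ℝ => max t 0 ^ 2) 0 (Ici 0) 0 := by
    have hsq : HasDerivWithinAt (fun t : ℝ => t ^ 2) 0 (Ici 0) 0 := by
      simpa using (hasDerivAt_pow 2 (0 : ℝ)).hasDerivWithinAt
    exact hsq.congr (fun t ht => by simp [max_eq_left (mem_Ici.mp ht)]) (by simp)
  simpa [Iic_union_Ici] using hleft.union hright

theorem neg_sq_max_zero_div_two_le (s : ℝ) {u : ℝ} (hu : 0 ≤ u) :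
    -(max s 0 ^ 2 / 2) ≤ u ^ 2 / 2 - s * u := by
  rcases le_total s 0 with hs | hs
  · rw [max_eq_right hs]; nlinarith
  · rw [max_eq_left hs]; nlinarith [sq_nonneg (u - s)]

theorem max_zero_sq_eq_mul (s : ℝ) : max s 0 ^ 2 = s * max s 0 := by
  rcases le_total s 0 with hs | hs
  · simp [max_eq_right hs]
  · rw [max_eq_left hs, sq]

section MoreauEnvelope

variable {lam r x : ℝ}

theorem le_moreauObjective (hlam : 0 < lam) (hx : 0 ≤ x) (u : ℝ) :
    lam * x ^ 2 - lam / 2 * max (2 * x - r) 0 ^ 2 ≤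
      lam * (-u ^ 2 / 2 + r * |u|) + lam * (u - x) ^ 2 := by
  suffices -(max (2 * x - r) 0 ^ 2 / 2) ≤ u ^ 2 / 2 + r * |u| - 2 * x * u by nlinarith
  rcases le_total 0 u with hu | hu
  · have := neg_sq_max_zero_div_two_le (2 * x - r) hu
    rw [abs_of_nonneg hu]; linarith
  · have := neg_sq_max_zero_div_two_le (-r - 2 * x) (neg_nonneg.mpr hu)
    have hmono : max (-r - 2 * x) 0 ^ 2 ≤ max (2 * x - r) 0 ^ 2 :=
      pow_le_pow_left₀ (le_max_right _ _) (max_le_max_right 0 (by linarith)) 2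
    rw [abs_of_nonpos hu]; nlinarith

theorem isLeast_moreauEnvelope (hlam : 0 < lam) (hx : 0 ≤ x) (hxr : x ≤ r) :
    IsLeast ((fun u => lam * (-u ^ 2 / 2 + r * |u|) + lam * (u - x) ^ 2) '' Icc (-r) r)
      (lam * x ^ 2 - lam / 2 * max (2 * x - r) 0 ^ 2) := by
  refine ⟨⟨max (2 * x - r) 0, ⟨?_, ?_⟩, ?_⟩, ?_⟩
  · exact (by linarith : -r ≤ 0).trans (le_max_right _ _)
  · exact max_le (by linarith) (by linarith)
  · dsimp only
    rw [abs_of_nonneg (le_max_right (2 * x - r) 0)]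
    linear_combination lam * max_zero_sq_eq_mul (2 * x - r)
  · rintro _ ⟨u, -, rfl⟩
    exact le_moreauObjective hlam hx u

end MoreauEnvelope

/-- Proposition 4.1(1) core computation: the Moreau envelope of φ(u) = λ(-u²/2 + r|u|)
over [-r, r] is differentiable at x* = r/2 with |φ'_{2λ}(x*)| = μR = μD/2. -/
theorem stmt9 (lam mu D : ℝ) (hlam : 0 < lam) (hmu : 0 < mu) (hD : 0 < D) :
    let R := D / 2
    let r := mu * R / lam
    let φ : ℝ → ℝ := fun u => lam * (-u ^ 2 / 2 + r * |u|)
    let env : ℝ → ℝ := fun x => sInf ((fun u => φ u + lam * (u - x) ^ 2) '' Set.Icc (-r) r)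
    ∃ d : ℝ, HasDerivAt env d (r / 2) ∧ |d| = mu * R ∧ |d| = mu * D / 2 := by
  intro R r φ env
  have hr : 0 < r := by positivity
  have henv : env =ᶠ[𝓝 (r / 2)] fun x => lam * x ^ 2 - lam / 2 * max (2 * x - r) 0 ^ 2 := by
    filter_upwards [Icc_mem_nhds (half_pos hr) (half_lt_self hr)] with x hx
    exact (isLeast_moreauEnvelope hlam hx.1 hx.2).csInf_eq
  have hthreshold : HasDerivAt (fun x => max (2 * x - r) 0 ^ 2) 0 (r / 2) := by
    have hlin : HasDerivAt (fun x => 2 * x - r) 2 (r / 2) := by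
      simpa using ((hasDerivAt_id (r / 2)).const_mul 2).sub_const r
    have := hasDerivAt_max_zero_sq_zero.comp_of_eq (hh := hlin) (hy := by ring)
    simpa only [Function.comp_def, zero_mul] using this
  have hderiv : HasDerivAt env (lam * r) (r / 2) := by
    have := ((hasDerivAt_pow 2 (r / 2)).const_mul lam).sub (hthreshold.const_mul (lam / 2))
    exact (this.congr_deriv (by ring)).congr_of_eventuallyEq henv
  have hval : lam * r = mu * R := mul_div_cancel₀ _ hlam.ne'
  refine ⟨lam * r, hderiv, ?_, ?_⟩
  · rw [hval, abs_of_pos (by positivity)]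
  · rw [hval, abs_of_pos (by positivity)]; ring
end

section
/- Let X ⊆ E be convex, and for x ∈ X, ξ ∈ E define S_X(x, ξ, λ)² := 2λ · sup_{u ∈ X} { -⟨ξ, u - x⟩ - (λ/2)‖u - x‖² }. Then for fixed x and ξ, the function λ ↦ S_X(x, ξ, λ) is non-decreasing in λ > 0. -/
open scoped InnerProductSpace

lemma stmt15_bdd {E : Type*} [NormedAddCommGroup E] [InnerProductSpace ℝ E]
    (X : Set E) (x : E) (ξ : E) (lam : ℝ) (hl : 0 < lam) :
    BddAbove (Set.range fun u => ⨆ _ : u ∈ X, (-(⟪ξ, u - x⟫_ℝ) - lam / 2 * ‖u - x‖ ^ 2)) := by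
  refine ⟨‖ξ‖ ^ 2 / (2 * lam), ?_⟩
  rintro y ⟨u, rfl⟩
  dsimp only
  by_cases hu : u ∈ X
  · rw [ciSup_pos hu]
    have hCS : -(⟪ξ, u - x⟫_ℝ) ≤ ‖ξ‖ * ‖u - x‖ := by
      have := abs_real_inner_le_norm ξ (u - x)
      have := neg_abs_le (⟪ξ, u - x⟫_ℝ)
      linarith
    have ht : (0:ℝ) ≤ ‖u - x‖ := norm_nonneg _
    rw [le_div_iff₀ (by positivity)]
    nlinarith [sq_nonneg (lam * ‖u - x‖ - ‖ξ‖), mul_nonneg (norm_nonneg ξ) ht]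
  · haveI : IsEmpty (u ∈ X) := ⟨hu⟩
    rw [iSup_of_empty', Real.sSup_empty]
    positivity

lemma stmt15_nonneg {E : Type*} [NormedAddCommGroup E] [InnerProductSpace ℝ E]
    (X : Set E) (x : E) (hx : x ∈ X) (ξ : E) (lam : ℝ) (hl : 0 < lam) :
    0 ≤ ⨆ u ∈ X, (-(⟪ξ, u - x⟫_ℝ) - lam / 2 * ‖u - x‖ ^ 2) := by
  refine le_ciSup_of_le (stmt15_bdd X x ξ lam hl) x ?_
  rw [ciSup_pos hx]
  simp

/-- Monotonicity of the stationarity measure S_X(x, ξ, λ) in λ > 0. -/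
theorem stmt15 {E : Type*} [NormedAddCommGroup E] [InnerProductSpace ℝ E]
    [FiniteDimensional ℝ E] (X : Set E) (hX : Convex ℝ X)
    (x : E) (hx : x ∈ X) (ξ : E)
    (lam₁ lam₂ : ℝ) (h₁ : 0 < lam₁) (h₁₂ : lam₁ ≤ lam₂) :
    Real.sqrt (2 * lam₁ * ⨆ u ∈ X, (-(⟪ξ, u - x⟫_ℝ) - lam₁ / 2 * ‖u - x‖ ^ 2))
      ≤ Real.sqrt (2 * lam₂ * ⨆ u ∈ X, (-(⟪ξ, u - x⟫_ℝ) - lam₂ / 2 * ‖u - x‖ ^ 2)) := by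
  have h₂ : 0 < lam₂ := lt_of_lt_of_le h₁ h₁₂
  set g₁ := ⨆ u ∈ X, (-(⟪ξ, u - x⟫_ℝ) - lam₁ / 2 * ‖u - x‖ ^ 2) with hg₁
  set g₂ := ⨆ u ∈ X, (-(⟪ξ, u - x⟫_ℝ) - lam₂ / 2 * ‖u - x‖ ^ 2) with hg₂
  have hg₂0 : 0 ≤ g₂ := stmt15_nonneg X x hx ξ lam₂ h₂
  have hkey : g₁ ≤ (lam₂ / lam₁) * g₂ := by
    refine Real.iSup_le (fun u => ?_) (by positivity)
    by_cases hu : u ∈ X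
    · rw [ciSup_pos hu]
      set c : ℝ := lam₁ / lam₂ with hc
      have hc0 : 0 ≤ c := by positivity
      have hc1 : c ≤ 1 := by
        rw [hc, div_le_one h₂]; exact h₁₂
      set v : E := x + c • (u - x) with hv
      have hvX : v ∈ X := by
        have hvdef : v = (1 - c) • x + c • u := by
          rw [hv]; module
        rw [hvdef]
        exact hX hx hu (by linarith) hc0 (by ring)
      have hvx : v - x = c • (u - x) := by rw [hv]; abel
      have hident : -(⟪ξ, u - x⟫_ℝ) - lam₁ / 2 * ‖u - x‖ ^ 2
          = (lam₂ / lam₁) * (-(⟪ξ, v - x⟫_ℝ) - lam₂ / 2 * ‖v - x‖ ^ 2) := by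
        rw [hvx, real_inner_smul_right, norm_smul, Real.norm_eq_abs,
          abs_of_nonneg hc0, hc]
        field_simp
      rw [hident]
      refine mul_le_mul_of_nonneg_left ?_ (by positivity)
      refine le_ciSup_of_le (stmt15_bdd X x ξ lam₂ h₂) v ?_
      rw [ciSup_pos hvX]
    · haveI : IsEmpty (u ∈ X) := ⟨hu⟩
      rw [iSup_of_empty', Real.sSup_empty]
      positivity
  apply Real.sqrt_le_sqrt
  have : lam₁ * g₁ ≤ lam₂ * g₂ := by
    calc lam₁ * g₁ ≤ lam₁ * ((lam₂ / lam₁) * g₂) :=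
          mul_le_mul_of_nonneg_left hkey (le_of_lt h₁)
    _ = lam₂ * g₂ := by field_simp
  linarith
end

section
/- Let λ, μ, ρ > 0 with μ ≤ √(λρ/2), and R > 0. Consider f(x,y) = -(λ/2)x² + μxy - (ρ/2)y² and the primal function φ(x) = max_{|y| ≤ R} f(x,y). Then for all |x| ≤ ρR/μ one has φ(x) = ((μ²/ρ - λ)/2)·x², and the proximal point x⁺(x) of φ with stepsize 1/(2λ) (over ℝ) equals 2λρx/(λρ + μ²) whenever 2λρ|x|/(λρ+μ²) ≤ ρR/μ; moreover, at x* = μR/λ the Moreau-envelope derivative satisfies -φ'_{2λ}(x*) = 2λ·(μR/λ)·(λρ - μ²)/(λρ + μ²) ≥ (2/3)μR. -/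
/-!
Completing the square, `f(x, y) = ((μ²/ρ - λ)/2) x² - (μx - ρy)²/(2ρ)`, so the inner maximum is
attained at `y = μx/ρ` as long as this lies in `[-R, R]`. For the prox objective one bounds `φ(u)`
from below by `f(u, y⁺)` with the fixed `y⁺ = μx⁺/ρ`; the result is a quadratic in `u` with
leading coefficient `λ/2` and vertex `x⁺`, and `φ(x⁺) = f(x⁺, y⁺)`. Hence the Moreau envelope is
the quadratic `-λ(λρ - μ²)/(λρ + μ²) x²` near `x* = μR/λ`, which lies strictly inside the region
where this computation is valid because `μ² < λρ`.
-/

open Set Topology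

noncomputable section

def saddle (lam mu rho x y : ℝ) : ℝ := -(lam / 2) * x ^ 2 + mu * x * y - rho / 2 * y ^ 2

def primal (lam mu rho R x : ℝ) : ℝ := sSup (saddle lam mu rho x '' Icc (-R) R)

def moreauEnvelope (φ : ℝ → ℝ) (lam x : ℝ) : ℝ := sInf (range fun u => φ u + lam * (u - x) ^ 2)

def proxPoint (lam mu rho x : ℝ) : ℝ := 2 * lam * rho * x / (lam * rho + mu ^ 2)

end

variable {lam mu rho R x : ℝ}

lemma saddle_le (hrho : 0 < rho) (y : ℝ) :
    saddle lam mu rho x y ≤ (mu ^ 2 / rho - lam) / 2 * x ^ 2 := by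
  have hsq : (mu ^ 2 / rho - lam) / 2 * x ^ 2 - saddle lam mu rho x y
      = (mu * x - rho * y) ^ 2 / (2 * rho) := by
    unfold saddle; field_simp; ring
  have : 0 ≤ (mu * x - rho * y) ^ 2 / (2 * rho) := by positivity
  linarith

lemma saddle_argmax (hrho : 0 < rho) :
    saddle lam mu rho x (mu * x / rho) = (mu ^ 2 / rho - lam) / 2 * x ^ 2 := by
  unfold saddle; field_simp; ring

lemma div_mem_Icc_of_abs_le (hmu : 0 < mu) (hrho : 0 < rho) (hx : |x| ≤ rho * R / mu) :
    mu * x / rho ∈ Icc (-R) R := by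
  rw [mem_Icc, ← abs_le, abs_div, abs_mul, abs_of_pos hmu, abs_of_pos hrho, div_le_iff₀ hrho]
  rw [le_div_iff₀ hmu] at hx
  linarith

lemma saddle_le_primal (hrho : 0 < rho) {y : ℝ} (hy : y ∈ Icc (-R) R) :
    saddle lam mu rho x y ≤ primal lam mu rho R x :=
  le_csSup ⟨_, forall_mem_image.2 fun y _ => saddle_le hrho y⟩ (mem_image_of_mem _ hy)

lemma primal_eq_of_abs_le (hmu : 0 < mu) (hrho : 0 < rho) (hx : |x| ≤ rho * R / mu) :
    primal lam mu rho R x = (mu ^ 2 / rho - lam) / 2 * x ^ 2 := by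
  refine IsGreatest.csSup_eq ⟨⟨mu * x / rho, div_mem_Icc_of_abs_le hmu hrho hx, ?_⟩, ?_⟩
  · exact saddle_argmax hrho
  · exact forall_mem_image.2 fun y _ => saddle_le hrho y

lemma abs_proxPoint (hlam : 0 < lam) (hmu : 0 < mu) (hrho : 0 < rho) :
    |proxPoint lam mu rho x| = 2 * lam * rho * |x| / (lam * rho + mu ^ 2) := by
  unfold proxPoint
  rw [abs_div, abs_mul, abs_of_pos (by positivity : 0 < lam * rho + mu ^ 2),
    abs_of_pos (by positivity : (0 : ℝ) < 2 * lam * rho)]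

lemma saddle_prox_objective_eq (hlam : 0 < lam) (hmu : 0 < mu) (hrho : 0 < rho) (u : ℝ) :
    saddle lam mu rho u (mu * proxPoint lam mu rho x / rho) + lam * (u - x) ^ 2
      = (mu ^ 2 / rho - lam) / 2 * proxPoint lam mu rho x ^ 2
          + lam * (proxPoint lam mu rho x - x) ^ 2
          + lam / 2 * (u - proxPoint lam mu rho x) ^ 2 := by
  have : lam * rho + mu ^ 2 ≠ 0 := by positivity
  unfold saddle proxPoint
  field_simp
  ring

lemma primal_prox_objective_le (hlam : 0 < lam) (hmu : 0 < mu) (hrho : 0 < rho)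
    (hx : 2 * lam * rho * |x| / (lam * rho + mu ^ 2) ≤ rho * R / mu) (u : ℝ) :
    primal lam mu rho R (proxPoint lam mu rho x) + lam * (proxPoint lam mu rho x - x) ^ 2
      ≤ primal lam mu rho R u + lam * (u - x) ^ 2 := by
  rw [← abs_proxPoint hlam hmu hrho] at hx
  have hy := div_mem_Icc_of_abs_le hmu hrho hx
  have hsaddle := saddle_le_primal (lam := lam) (mu := mu) (x := u) hrho hy
  have hsq : 0 ≤ lam / 2 * (u - proxPoint lam mu rho x) ^ 2 := by positivity
  rw [primal_eq_of_abs_le hmu hrho hx]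
  linarith [saddle_prox_objective_eq (x := x) hlam hmu hrho u]

lemma moreauEnvelope_primal_eq (hlam : 0 < lam) (hmu : 0 < mu) (hrho : 0 < rho)
    (hx : 2 * lam * rho * |x| / (lam * rho + mu ^ 2) ≤ rho * R / mu) :
    moreauEnvelope (primal lam mu rho R) lam x
      = -(lam * (lam * rho - mu ^ 2)) / (lam * rho + mu ^ 2) * x ^ 2 := by
  have hvalue : primal lam mu rho R (proxPoint lam mu rho x)
      + lam * (proxPoint lam mu rho x - x) ^ 2
        = -(lam * (lam * rho - mu ^ 2)) / (lam * rho + mu ^ 2) * x ^ 2 := by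
    have : lam * rho + mu ^ 2 ≠ 0 := by positivity
    rw [primal_eq_of_abs_le hmu hrho ((abs_proxPoint hlam hmu hrho).trans_le hx), proxPoint]
    field_simp
    ring
  rw [← hvalue]
  exact IsLeast.csInf_eq ⟨mem_range_self _,
    forall_mem_range.2 (primal_prox_objective_le hlam hmu hrho hx)⟩

lemma hasDerivAt_moreauEnvelope_primal (hlam : 0 < lam) (hmu : 0 < mu) (hrho : 0 < rho)
    (hx : 2 * lam * rho * |x| / (lam * rho + mu ^ 2) < rho * R / mu) :
    HasDerivAt (moreauEnvelope (primal lam mu rho R) lam)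
      (-(lam * (lam * rho - mu ^ 2)) / (lam * rho + mu ^ 2) * (2 * x)) x := by
  have hnear : ∀ᶠ z in 𝓝 x, 2 * lam * rho * |z| / (lam * rho + mu ^ 2) < rho * R / mu :=
    (continuous_const.mul continuous_abs |>.div_const _).continuousAt.eventually_lt
      continuousAt_const hx
  have hquad : HasDerivAt (fun z => -(lam * (lam * rho - mu ^ 2)) / (lam * rho + mu ^ 2) * z ^ 2)
      (-(lam * (lam * rho - mu ^ 2)) / (lam * rho + mu ^ 2) * (2 * x)) x := by
    simpa using (hasDerivAt_pow 2 x).const_mul (-(lam * (lam * rho - mu ^ 2)) / (lam * rho + mu ^ 2))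
  refine hquad.congr_of_eventuallyEq ?_
  filter_upwards [hnear] with z hz
  exact moreauEnvelope_primal_eq hlam hmu hrho hz.le

lemma one_third_le_div_of_le_half {a b : ℝ} (ha : 0 < a) (hb : 0 ≤ b) (hba : b ≤ a / 2) :
    1 / 3 ≤ (a - b) / (a + b) := by
  rw [div_le_div_iff₀ (by norm_num) (by linarith)]
  linarith

/-- Computation in the proof of Proposition 4.2(1) for the weakly-coupled quadratic example. -/
theorem stmt17 (lam mu rho R : ℝ) (hlam : 0 < lam) (hmu : 0 < mu) (hrho : 0 < rho)
    (hR : 0 < R) (hcoup : mu ≤ Real.sqrt (lam * rho / 2)) :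
    let φ : ℝ → ℝ := fun x =>
      sSup ((fun y => -(lam / 2) * x ^ 2 + mu * x * y - rho / 2 * y ^ 2) '' Set.Icc (-R) R)
    (∀ x : ℝ, |x| ≤ rho * R / mu → φ x = (mu ^ 2 / rho - lam) / 2 * x ^ 2) ∧
    (∀ x : ℝ, 2 * lam * rho * |x| / (lam * rho + mu ^ 2) ≤ rho * R / mu →
      ∀ u : ℝ, φ (2 * lam * rho * x / (lam * rho + mu ^ 2))
          + lam * (2 * lam * rho * x / (lam * rho + mu ^ 2) - x) ^ 2
        ≤ φ u + lam * (u - x) ^ 2) ∧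
    (∃ d : ℝ,
      HasDerivAt (fun x => sInf (Set.range fun u => φ u + lam * (u - x) ^ 2)) d (mu * R / lam) ∧
      -d = 2 * mu * R * (lam * rho - mu ^ 2) / (lam * rho + mu ^ 2) ∧
      2 / 3 * (mu * R) ≤ -d) := by
  intro φ
  have hmu2 : mu ^ 2 ≤ lam * rho / 2 := (Real.le_sqrt' hmu).1 hcoup
  have hinside : 2 * lam * rho * |mu * R / lam| / (lam * rho + mu ^ 2) < rho * R / mu := by
    rw [abs_of_pos (by positivity), div_lt_div_iff₀ (by positivity) hmu]
    field_simp
    nlinarith [mul_pos (mul_pos hrho hR) hmu, mul_pos hlam hrho]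
  refine ⟨fun x hx => primal_eq_of_abs_le hmu hrho hx,
    fun x hx => primal_prox_objective_le hlam hmu hrho hx,
    _, hasDerivAt_moreauEnvelope_primal hlam hmu hrho hinside, ?_, ?_⟩
  · field_simp
  · have key := one_third_le_div_of_le_half (by positivity) (sq_nonneg mu) hmu2
    have hval : -(-(lam * (lam * rho - mu ^ 2)) / (lam * rho + mu ^ 2) * (2 * (mu * R / lam)))
        = 2 * (mu * R) * ((lam * rho - mu ^ 2) / (lam * rho + mu ^ 2)) := by
      field_simp
    rw [hval]
    nlinarith [mul_pos hmu hR]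
end
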